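/- For k ≥ 2 and u > 0, (2π)^{−k/2} ∫_{B_k(√u)} (∂⁴/∂z₁⁴) exp(−|z|²/2) dz = 3·(2u/k − 2u²/(k(k+2))) · u^{k/2−1} exp(−u/2) / (2^{k/2} Γ(k/2)). -/

import Mathlib

open MeasureTheory Real Set


lemma hd_aux (S : ℝ) (P P' : ℝ → ℝ) (hP : ∀ x, HasDerivAt P (P' x) x) (x : ℝ) :
    HasDerivAt (fun t => P t * Real.exp (-(t^2+S)/2))
      ((P' x - x * P x) * Real.exp (-(x^2+S)/2)) x := by
  have h1 : HasDerivAt (fun t : ℝ => -(t^2+S)/2) (-x) x := by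
    have : HasDerivAt (fun t : ℝ => t^2+S) (2*x) x :=
      ((hasDerivAt_pow 2 x).add_const S).congr_deriv (by ring)
    simpa using ((this.neg).div_const 2).congr_deriv (by ring)
  have h2 : HasDerivAt (fun t : ℝ => Real.exp (-(t^2+S)/2))
      (Real.exp (-(x^2+S)/2) * (-x)) x := (Real.hasDerivAt_exp _).comp x h1
  exact ((hP x).mul h2).congr_deriv (by ring)

lemma gauss4 (S x : ℝ) :
    iteratedDeriv 4 (fun t => Real.exp (-(t^2 + S)/2)) x
      = (x^4 - 6*x^2 + 3) * Real.exp (-(x^2+S)/2) := by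
  have e0 : (fun t : ℝ => Real.exp (-(t^2+S)/2))
      = fun t => (1 : ℝ) * Real.exp (-(t^2+S)/2) := by funext t; ring
  have d1 : deriv (fun t : ℝ => Real.exp (-(t^2+S)/2))
      = fun x => (-x) * Real.exp (-(x^2+S)/2) := by
    funext y
    have := hd_aux S (fun _ => 1) (fun _ => 0) (fun x => hasDerivAt_const x 1) y
    rw [e0]; rw [this.deriv]; ring
  have d2 : deriv (fun x : ℝ => (-x) * Real.exp (-(x^2+S)/2))
      = fun x => (x^2 - 1) * Real.exp (-(x^2+S)/2) := by
    funext y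
    have := hd_aux S (fun t => -t) (fun _ => -1) (fun x => (hasDerivAt_id x).neg) y
    rw [this.deriv]; ring_nf
  have d3 : deriv (fun x : ℝ => (x^2-1) * Real.exp (-(x^2+S)/2))
      = fun x => (3*x - x^3) * Real.exp (-(x^2+S)/2) := by
    funext y
    have := hd_aux S (fun t => t^2-1) (fun t => 2*t)
      (fun x => ((hasDerivAt_pow 2 x).sub_const 1).congr_deriv (by ring)) y
    rw [this.deriv]; ring_nf
  have d4 : deriv (fun x : ℝ => (3*x - x^3) * Real.exp (-(x^2+S)/2))
      = fun x => (x^4 - 6*x^2 + 3) * Real.exp (-(x^2+S)/2) := by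
    funext y
    have := hd_aux S (fun t => 3*t - t^3) (fun t => 3 - 3*t^2)
      (fun x => (((hasDerivAt_id x).const_mul 3).sub ((hasDerivAt_pow 3 x))).congr_deriv
        (by push_cast; ring)) y
    rw [this.deriv]; ring_nf
  show iteratedDeriv (3+1) _ x = _
  rw [iteratedDeriv_succ, iteratedDeriv_succ, iteratedDeriv_succ, iteratedDeriv_succ,
    iteratedDeriv_zero, d1, d2, d3, d4]

lemma inner_int (S a : ℝ) :
    ∫ t in (-a)..a, (t^4 - 6*t^2 + 3) * Real.exp (-(t^2+S)/2)
      = (6*a - 2*a^3) * Real.exp (-(a^2+S)/2) := by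
  have hderiv : ∀ x ∈ Set.uIcc (-a) a,
      HasDerivAt (fun t => (3*t - t^3) * Real.exp (-(t^2+S)/2))
        ((x^4 - 6*x^2 + 3) * Real.exp (-(x^2+S)/2)) x := by
    intro x _
    have := hd_aux S (fun t => 3*t - t^3) (fun t => 3 - 3*t^2)
      (fun x => (((hasDerivAt_id x).const_mul 3).sub ((hasDerivAt_pow 3 x))).congr_deriv
        (by push_cast; ring)) x
    exact this.congr_deriv (by ring)
  have hint : IntervalIntegrable (fun t => (t^4 - 6*t^2 + 3) * Real.exp (-(t^2+S)/2))
      volume (-a) a := (Continuous.intervalIntegrable (by continuity) _ _)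
  rw [intervalIntegral.integral_eq_sub_of_hasDerivAt hderiv hint]
  have : (-a)^2 = a^2 := by ring
  rw [this]; ring

lemma realBeta (a b : ℝ) (ha : 0 < a) (hb : 0 < b) :
    ∫ x in (0:ℝ)..1, x^(a-1) * (1-x)^(b-1)
      = Real.Gamma a * Real.Gamma b / Real.Gamma (a+b) := by
  have key := Complex.Gamma_mul_Gamma_eq_betaIntegral
    (s := (a:ℂ)) (t := (b:ℂ)) (by simpa using ha) (by simpa using hb)
  have hBeta : Complex.betaIntegral (a:ℂ) (b:ℂ)
      = ((∫ x in (0:ℝ)..1, x^(a-1) * (1-x)^(b-1) : ℝ) : ℂ) := by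
    rw [Complex.betaIntegral]
    rw [← intervalIntegral.integral_ofReal]
    apply intervalIntegral.integral_congr
    intro x hx
    rw [Set.uIcc_of_le (by norm_num : (0:ℝ) ≤ 1)] at hx
    have hx0 : (0:ℝ) ≤ x := hx.1
    have hx1 : (0:ℝ) ≤ 1 - x := by linarith [hx.2]
    dsimp only
    rw [show ((a:ℂ)-1) = ((a-1:ℝ):ℂ) by push_cast; ring,
       show ((b:ℂ)-1) = ((b-1:ℝ):ℂ) by push_cast; ring,
       show (1 - (x:ℂ)) = ((1-x:ℝ):ℂ) by push_cast; ring]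
    simp only [← Complex.ofReal_cpow hx0, ← Complex.ofReal_cpow hx1]
    push_cast
    ring
  have hG : Real.Gamma (a+b) ≠ 0 := (Real.Gamma_pos_of_pos (by linarith)).ne'
  have := key
  rw [hBeta] at this
  rw [show ((a:ℂ)+(b:ℂ)) = ((a+b:ℝ):ℂ) by push_cast; ring] at this
  rw [Complex.Gamma_ofReal, Complex.Gamma_ofReal, Complex.Gamma_ofReal,
    ← Complex.ofReal_mul, ← Complex.ofReal_mul] at this
  have h3 := Complex.ofReal_injective this
  field_simp
  linarith [h3]

noncomputable def hfun (u q : ℝ) : ℝ :=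
  if q ≤ u then (6 * Real.sqrt (u-q) - 2 * (Real.sqrt (u-q))^3) * Real.exp (-u/2) else 0


lemma inner_eval (u Q : ℝ) (hQ : 0 ≤ Q) :
    ∫ t : ℝ, Set.indicator {t : ℝ | t^2 + Q ≤ u}
      (fun t => (t^4 - 6*t^2 + 3) * Real.exp (-(t^2+Q)/2)) t = hfun u Q := by
  have hmeas : MeasurableSet {t : ℝ | t^2 + Q ≤ u} := by
    have : Continuous fun t : ℝ => t^2 + Q := by continuity
    exact measurableSet_le this.measurable measurable_const
  rw [integral_indicator hmeas]
  by_cases hQu : Q ≤ u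
  · have hd : 0 ≤ u - Q := by linarith
    have hset : {t : ℝ | t^2 + Q ≤ u} = Set.Icc (-Real.sqrt (u-Q)) (Real.sqrt (u-Q)) := by
      ext t
      simp only [Set.mem_setOf_eq, Set.mem_Icc, ← abs_le]
      constructor
      · intro h
        have : |t| = Real.sqrt (t^2) := (Real.sqrt_sq_eq_abs t).symm
        rw [this]
        exact Real.sqrt_le_sqrt (by linarith)
      · intro h
        rw [← Real.sqrt_sq_eq_abs] at h
        have h2 : Real.sqrt (t^2) ^ 2 ≤ Real.sqrt (u-Q) ^ 2 :=
          pow_le_pow_left₀ (Real.sqrt_nonneg _) h 2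
        rw [Real.sq_sqrt (sq_nonneg t), Real.sq_sqrt hd] at h2
        linarith
    rw [hset, MeasureTheory.integral_Icc_eq_integral_Ioc,
      ← intervalIntegral.integral_of_le (by linarith [Real.sqrt_nonneg (u-Q)] : -Real.sqrt (u-Q) ≤ Real.sqrt (u-Q)),
      inner_int]
    rw [hfun, if_pos hQu, Real.sq_sqrt hd]
    have : u - Q + Q = u := by ring
    rw [this]
  · have hset : {t : ℝ | t^2 + Q ≤ u} = (∅ : Set ℝ) := by
      ext t; simp only [Set.mem_setOf_eq, Set.mem_empty_iff_false, iff_false]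
      nlinarith [sq_nonneg t]
    rw [hset, hfun, if_neg hQu]
    simp


lemma scaledBeta (u : ℝ) (hu : 0 < u) (a b : ℝ) (ha : 0 < a) (hb : 0 < b) :
    ∫ y in (0:ℝ)..u, y^(a-1) * (u-y)^(b-1)
      = u^(a+b-1) * (Real.Gamma a * Real.Gamma b / Real.Gamma (a+b)) := by
  have key2 : ∫ y in (0:ℝ)..u, y^(a-1) * (u-y)^(b-1)
      = u * ∫ x in (0:ℝ)..1, (u*x)^(a-1) * (u-u*x)^(b-1) := by
    have key := intervalIntegral.integral_comp_mul_left (a := (0:ℝ)) (b := (1:ℝ))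
      (fun y => y^(a-1) * (u-y)^(b-1)) (c := u) hu.ne'
    rw [mul_zero, mul_one, smul_eq_mul] at key
    rw [key]
    field_simp
  rw [key2]
  have congr1 : ∫ x in (0:ℝ)..1, (u*x)^(a-1) * (u-u*x)^(b-1)
      = ∫ x in (0:ℝ)..1, (u^(a-1) * u^(b-1)) * (x^(a-1) * (1-x)^(b-1)) := by
    apply intervalIntegral.integral_congr
    intro x hx
    rw [Set.uIcc_of_le (by norm_num : (0:ℝ) ≤ 1)] at hx
    have h1 : (0:ℝ) ≤ x := hx.1
    have h2 : (0:ℝ) ≤ 1 - x := by linarith [hx.2]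
    dsimp only
    have e1 : u - u*x = u * (1-x) := by ring
    rw [e1, Real.mul_rpow hu.le h1, Real.mul_rpow hu.le h2]
    ring
  rw [congr1, intervalIntegral.integral_const_mul, realBeta a b ha hb]
  rw [show u * (u^(a-1) * u^(b-1) * (Real.Gamma a * Real.Gamma b / Real.Gamma (a+b)))
      = (u^(1:ℝ) * (u^(a-1) * u^(b-1))) * (Real.Gamma a * Real.Gamma b / Real.Gamma (a+b))
    by rw [Real.rpow_one]; ring]
  rw [← Real.rpow_add hu, ← Real.rpow_add hu]
  ring_nf

lemma isCompact_K (m : ℕ) (u : ℝ) : IsCompact {z : Fin m → ℝ | ∑ i, z i ^2 ≤ u} := by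
  apply Metric.isCompact_of_isClosed_isBounded
  · have hc : Continuous fun z : Fin m → ℝ => ∑ i, z i ^2 := by continuity
    exact isClosed_le hc continuous_const
  · rw [Metric.isBounded_iff_subset_closedBall 0]
    refine ⟨Real.sqrt u, fun z hz => ?_⟩
    simp only [Set.mem_setOf_eq] at hz
    rw [Metric.mem_closedBall, dist_zero_right]
    rw [pi_norm_le_iff_of_nonneg (Real.sqrt_nonneg u)]
    intro i
    have h0 : z i ^2 ≤ ∑ j, z j ^2 := by
      simpa using Finset.single_le_sum (f := fun j => z j ^2)
        (fun j _ => sq_nonneg (z j)) (Finset.mem_univ i)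
    have h1 : z i ^2 ≤ u := le_trans h0 hz
    rw [Real.norm_eq_abs, ← Real.sqrt_sq_eq_abs]
    exact Real.sqrt_le_sqrt h1




lemma cont_rpow_const (c : ℝ) (hc : 0 < c) : Continuous (fun x : ℝ => x ^ c) :=
  continuous_iff_continuousAt.2 fun x => Real.continuousAt_rpow_const x c (Or.inr hc.le)

lemma int_beta (n : ℕ) (hn : 1 ≤ n) (u c : ℝ) (hc : 0 < c) :
    IntervalIntegrable (fun y => y^((n:ℝ)/2-1) * (u-y)^c) volume 0 u := by
  have h1 : IntervalIntegrable (fun y : ℝ => y^((n:ℝ)/2-1)) volume 0 u := by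
    apply intervalIntegral.intervalIntegrable_rpow'
    have : (1:ℝ) ≤ (n:ℝ) := by exact_mod_cast hn
    linarith
  exact h1.mul_continuousOn (((cont_rpow_const c hc).comp
    (continuous_const.sub continuous_id)).continuousOn)

lemma rad_int (n : ℕ) (hn : 1 ≤ n) (u : ℝ) (hu : 0 < u) :
    ∫ r in Set.Ioi (0:ℝ), (r:ℝ)^(n-1) * hfun u (r^2)
      = Real.exp (-u/2) *
        (3 * (u ^ ((n:ℝ)/2 + 1/2) *
            (Real.Gamma ((n:ℝ)/2) * Real.Gamma (3/2) / Real.Gamma ((n:ℝ)/2 + 3/2)))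
          - u ^ ((n:ℝ)/2 + 3/2) *
            (Real.Gamma ((n:ℝ)/2) * Real.Gamma (5/2) / Real.Gamma ((n:ℝ)/2 + 5/2))) := by
  set g : ℝ → ℝ := fun y => (1/2) * (y^((n:ℝ)/2 - 1) * hfun u y) with hg
  have step1 : ∫ r in Set.Ioi (0:ℝ), (r:ℝ)^(n-1) * hfun u (r^2)
      = ∫ x in Set.Ioi (0:ℝ), (|(2:ℝ)| * x^((2:ℝ)-1)) • g (x^(2:ℝ)) := by
    apply setIntegral_congr_fun measurableSet_Ioi
    intro x hx
    have hx0 : (0:ℝ) < x := hx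
    have e1 : x^((2:ℝ)) = x^(2:ℕ) := by
      rw [← Real.rpow_natCast x 2]; norm_num
    have e2 : ((x:ℝ)^(2:ℕ))^((n:ℝ)/2 - 1) = x^((n:ℝ) - 2) := by
      rw [← Real.rpow_natCast x 2, ← Real.rpow_mul hx0.le,
        show ((2:ℕ):ℝ)*((n:ℝ)/2-1) = (n:ℝ)-2 by push_cast; ring]
    have e4 : (x:ℝ)^(n-1:ℕ) = x^((n:ℝ)-1) := by
      rw [← Real.rpow_natCast x (n-1), Nat.cast_sub hn, Nat.cast_one]
    simp only [hg, smul_eq_mul]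
    rw [e1, e2, e4]
    rw [abs_of_nonneg (by norm_num : (0:ℝ) ≤ 2),
      show (2:ℝ)-1 = (1:ℝ) by norm_num, Real.rpow_one]
    rw [show (n:ℝ)-1 = 1 + ((n:ℝ)-2) by ring, Real.rpow_add hx0, Real.rpow_one]
    ring
  rw [step1, integral_comp_rpow_Ioi g (by norm_num : (2:ℝ) ≠ 0)]
  set g' : ℝ → ℝ := fun y => Real.exp (-u/2) *
    (3 * (y^((n:ℝ)/2-1) * (u-y)^((1/2:ℝ))) - y^((n:ℝ)/2-1) * (u-y)^((3/2:ℝ))) with hg'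
  have step3 : ∫ y in Set.Ioi (0:ℝ), g y = ∫ y in Set.Ioi (0:ℝ), (Set.Ioc 0 u).indicator g' y := by
    apply setIntegral_congr_fun measurableSet_Ioi
    intro y hy
    have hy0 : (0:ℝ) < y := hy
    rw [Set.indicator_apply]
    by_cases hyu : y ≤ u
    · rw [if_pos ⟨hy0, hyu⟩, hg, hg']
      dsimp only
      rw [hfun, if_pos hyu]
      have hsub : (0:ℝ) ≤ u - y := by linarith
      rw [Real.sqrt_eq_rpow]
      rw [show ((u-y)^((1/2:ℝ)))^(3:ℕ) = (u-y)^((3/2:ℝ)) by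
        rw [← Real.rpow_natCast ((u-y)^((1/2:ℝ))) 3, ← Real.rpow_mul hsub]; norm_num]
      ring
    · rw [if_neg (by simp [hyu]), hg]
      dsimp only
      rw [hfun, if_neg hyu]
      ring
  rw [step3, setIntegral_indicator measurableSet_Ioc,
    Set.inter_eq_self_of_subset_right Set.Ioc_subset_Ioi_self,
    ← intervalIntegral.integral_of_le hu.le]
  have i1 := int_beta n hn u (1/2) (by norm_num)
  have i2 := int_beta n hn u (3/2) (by norm_num)
  rw [hg']
  rw [intervalIntegral.integral_const_mul]
  rw [intervalIntegral.integral_sub (i1.const_mul 3) i2,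
    intervalIntegral.integral_const_mul]
  have b1 : ∫ y in (0:ℝ)..u, y^((n:ℝ)/2-1) * (u-y)^((1/2:ℝ))
      = u^((n:ℝ)/2 + 1/2) * (Real.Gamma ((n:ℝ)/2) * Real.Gamma (3/2) / Real.Gamma ((n:ℝ)/2 + 3/2)) := by
    have := scaledBeta u hu ((n:ℝ)/2) (3/2) (by positivity) (by norm_num)
    rw [show (3/2 : ℝ) - 1 = 1/2 by norm_num, show (n:ℝ)/2 + 3/2 - 1 = (n:ℝ)/2 + 1/2 by ring] at this
    exact this
  have b2 : ∫ y in (0:ℝ)..u, y^((n:ℝ)/2-1) * (u-y)^((3/2:ℝ))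
      = u^((n:ℝ)/2 + 3/2) * (Real.Gamma ((n:ℝ)/2) * Real.Gamma (5/2) / Real.Gamma ((n:ℝ)/2 + 5/2)) := by
    have := scaledBeta u hu ((n:ℝ)/2) (5/2) (by positivity) (by norm_num)
    rw [show (5/2 : ℝ) - 1 = 3/2 by norm_num, show (n:ℝ)/2 + 5/2 - 1 = (n:ℝ)/2 + 3/2 by ring] at this
    exact this
  rw [b1, b2]

lemma final_arith (n : ℕ) (hn : 1 ≤ n) (u : ℝ) (hu : 0 < u) :
    (2*π)^(-(((n:ℝ)+1))/2) *
      ((n:ℝ) * ((Real.sqrt π)^n / Real.Gamma ((n:ℝ)/2+1)) *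
        (Real.exp (-u/2) *
          (3 * (u^((n:ℝ)/2+1/2) * (Real.Gamma ((n:ℝ)/2) * Real.Gamma (3/2) / Real.Gamma ((n:ℝ)/2+3/2)))
            - u^((n:ℝ)/2+3/2) * (Real.Gamma ((n:ℝ)/2) * Real.Gamma (5/2) / Real.Gamma ((n:ℝ)/2+5/2)))))
    = 3 * (2*u/((n:ℝ)+1) - 2*u^2/(((n:ℝ)+1)*(((n:ℝ)+1)+2))) *
        (u^((((n:ℝ)+1))/2-1) * Real.exp (-u/2) / (2^((((n:ℝ)+1))/2) * Real.Gamma ((((n:ℝ)+1))/2))) := by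
  have hn0 : (0:ℝ) < (n:ℝ) := by exact_mod_cast hn
  have hpi := Real.pi_pos
  have hne1 : ((n:ℝ)+1)/2 ≠ 0 := by positivity
  have hne2 : ((n:ℝ)+1)/2 + 1 ≠ 0 := by positivity
  have hG32 : Real.Gamma (3/2) = π^((1/2:ℝ)) / 2 := by
    rw [show (3/2:ℝ) = 1/2 + 1 by norm_num, Real.Gamma_add_one (by norm_num),
      Real.Gamma_one_half_eq, Real.sqrt_eq_rpow]
    ring
  have hG52 : Real.Gamma (5/2) = 3/4 * π^((1/2:ℝ)) := by
    rw [show (5/2:ℝ) = 3/2 + 1 by norm_num, Real.Gamma_add_one (by norm_num), hG32]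
    ring
  have hGn1 : Real.Gamma ((n:ℝ)/2+1) = ((n:ℝ)/2) * Real.Gamma ((n:ℝ)/2) :=
    Real.Gamma_add_one (by positivity)
  have hGk1 : Real.Gamma ((n:ℝ)/2+3/2) = (((n:ℝ)+1)/2) * Real.Gamma (((n:ℝ)+1)/2) := by
    rw [show (n:ℝ)/2+3/2 = ((n:ℝ)+1)/2 + 1 by ring, Real.Gamma_add_one hne1]
  have hGk2 : Real.Gamma ((n:ℝ)/2+5/2)
      = (((n:ℝ)+1)/2 + 1) * ((((n:ℝ)+1)/2) * Real.Gamma (((n:ℝ)+1)/2)) := by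
    rw [show (n:ℝ)/2+5/2 = (((n:ℝ)+1)/2 + 1) + 1 by ring, Real.Gamma_add_one hne2,
      Real.Gamma_add_one hne1]
  have h2pi : (2*π)^(-(((n:ℝ)+1))/2) = 2^(-(((n:ℝ)+1))/2) * π^(-(((n:ℝ)+1))/2) :=
    Real.mul_rpow (by norm_num) hpi.le
  have hsqpi : (Real.sqrt π)^n = π^((n:ℝ)/2) := by
    rw [Real.sqrt_eq_rpow, ← Real.rpow_natCast (π^((1/2:ℝ))) n, ← Real.rpow_mul hpi.le,
      show (1/2:ℝ)*((n:ℕ):ℝ) = (n:ℝ)/2 by push_cast; ring]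
  have hpinv : π^(-(((n:ℝ)+1))/2) = (π^(((n:ℝ))/2) * π^((1/2:ℝ)))⁻¹ := by
    rw [← Real.rpow_add hpi, show -(((n:ℝ)+1))/2 = -((n:ℝ)/2 + 1/2) by ring,
      Real.rpow_neg hpi.le]
  have h2inv : (2:ℝ)^(-(((n:ℝ)+1))/2) = ((2:ℝ)^((((n:ℝ)+1))/2))⁻¹ := by
    rw [show -(((n:ℝ)+1))/2 = -((((n:ℝ)+1))/2) by ring, Real.rpow_neg (by norm_num : (0:ℝ) ≤ 2)]
  have hu1 : u^((n:ℝ)/2+1/2) = u^((((n:ℝ)+1))/2 - 1) * u := by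
    rw [show (n:ℝ)/2+1/2 = ((((n:ℝ)+1))/2 - 1) + 1 by ring, Real.rpow_add hu, Real.rpow_one]
  have hu2 : u^((n:ℝ)/2+3/2) = u^((((n:ℝ)+1))/2 - 1) * u^2 := by
    rw [show (n:ℝ)/2+3/2 = ((((n:ℝ)+1))/2 - 1) + 2 by ring, Real.rpow_add hu,
      show (2:ℝ) = ((2:ℕ):ℝ) by norm_num, Real.rpow_natCast]
  rw [h2pi, hsqpi, hpinv, h2inv, hG32, hG52, hGn1, hGk1, hGk2, hu1, hu2]
  have hP : (0:ℝ) < π^(((n:ℝ))/2) := Real.rpow_pos_of_pos hpi _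
  have hQ : (0:ℝ) < π^((1/2:ℝ)) := Real.rpow_pos_of_pos hpi _
  have hB : (0:ℝ) < (2:ℝ)^((((n:ℝ)+1))/2) := Real.rpow_pos_of_pos (by norm_num) _
  have hGk : (0:ℝ) < Real.Gamma ((((n:ℝ)+1))/2) := Real.Gamma_pos_of_pos (by positivity)
  have hGn : (0:ℝ) < Real.Gamma (((n:ℝ))/2) := Real.Gamma_pos_of_pos (by positivity)
  have h3 : ((n:ℝ)+1)+2 ≠ 0 := by positivity
  field_simp
  ring




theorem stmt8 (k : ℕ) (hk : 2 ≤ k) (u : ℝ) (hu : 0 < u) :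
    (2 * Real.pi) ^ (-(k : ℝ) / 2) *
        ∫ z in {z : Fin k → ℝ | ∑ i, z i ^ 2 ≤ u},
          iteratedDeriv 4
            (fun t => Real.exp (-(∑ i, Function.update z ⟨0, by omega⟩ t i ^ 2) / 2))
            (z ⟨0, by omega⟩) =
      3 * (2 * u / k - 2 * u ^ 2 / (k * (k + 2))) *
        (u ^ ((k : ℝ) / 2 - 1) * Real.exp (-u / 2) /
          (2 ^ ((k : ℝ) / 2) * Real.Gamma ((k : ℝ) / 2))) := by
  obtain ⟨n, rfl⟩ : ∃ n, k = n + 1 := ⟨k - 1, by omega⟩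
  have hn : 1 ≤ n := by omega
  haveI : Nonempty (Fin n) := ⟨⟨0, hn⟩⟩
  haveI : Nontrivial (EuclideanSpace ℝ (Fin n)) := inferInstance
  set K : Set (Fin (n+1) → ℝ) := {z | ∑ i, z i ^ 2 ≤ u} with hKdef
  have hK : IsCompact K := isCompact_K (n+1) u
  have hKm : MeasurableSet K := hK.isClosed.measurableSet
  set F : (Fin (n+1) → ℝ) → ℝ :=
    fun z => ((z 0)^4 - 6*(z 0)^2 + 3) * Real.exp (-(∑ i, z i ^2)/2) with hFdef
  have hFc : Continuous F := by
    apply Continuous.mul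
    · fun_prop
    · apply Real.continuous_exp.comp
      fun_prop
  -- Step 1: rewrite integrand
  have integrand_eq : ∀ z : Fin (n+1) → ℝ,
      iteratedDeriv 4
        (fun t => Real.exp (-(∑ i, Function.update z (⟨0, by omega⟩ : Fin (n+1)) t i ^ 2) / 2))
        (z ⟨0, by omega⟩) = F z := by
    intro z
    have hz0 : (⟨0, by omega⟩ : Fin (n+1)) = 0 := rfl
    rw [hz0]
    have hsum : ∀ t : ℝ, ∑ i, Function.update z 0 t i ^ 2
        = t^2 + ∑ i ∈ Finset.univ \ {0}, z i ^2 := by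
      intro t
      have : ∀ i, Function.update z 0 t i ^ 2
          = Function.update (fun j => z j ^2) 0 (t^2) i := by
        intro i
        rcases eq_or_ne i 0 with h | h
        · subst h; simp
        · simp [Function.update_of_ne h]
      rw [Finset.sum_congr rfl (fun i _ => this i),
        Finset.sum_update_of_mem (Finset.mem_univ 0)]
    have hfun_eq : (fun t => Real.exp (-(∑ i, Function.update z 0 t i ^ 2) / 2))
        = fun t => Real.exp (-(t^2 + ∑ i ∈ Finset.univ \ {0}, z i ^2)/2) := by
      funext t; rw [hsum t]
    rw [hfun_eq, gauss4]
    have hsplit : (z 0)^2 + ∑ i ∈ Finset.univ \ {0}, z i ^2 = ∑ i, z i ^2 := by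
      have h2 := Finset.sum_update_of_mem (Finset.mem_univ (0 : Fin (n+1)))
        (fun j => z j ^2) ((z 0)^2)
      rw [show Function.update (fun j => z j ^2) 0 ((z 0)^2) = fun j => z j ^2 from
        Function.update_eq_self 0 (fun j => z j ^2)] at h2
      exact h2.symm
    rw [hFdef, hsplit]
  -- Step 2: set-integral to indicator, transfer to product
  set e := MeasurableEquiv.piFinSuccAbove (fun _ : Fin (n+1) => ℝ) 0 with hedef
  have hPres : MeasurePreserving (⇑e.symm)
      ((volume : Measure ℝ).prod (volume : Measure (Fin n → ℝ)))
      (volume : Measure (Fin (n+1) → ℝ)) := by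
    have h := (measurePreserving_piFinSuccAbove (fun _ : Fin (n+1) => (volume : Measure ℝ)) 0).symm e
    simpa [← MeasureTheory.volume_pi] using h
  have hIntPi : Integrable (K.indicator F) :=
    (integrable_indicator_iff hKm).2 (hFc.continuousOn.integrableOn_compact hK)
  have hIntProd : Integrable (fun p : ℝ × (Fin n → ℝ) => K.indicator F (e.symm p))
      ((volume : Measure ℝ).prod (volume : Measure (Fin n → ℝ))) :=
    (hPres.integrable_comp_emb e.symm.measurableEmbedding).2 hIntPi
  have comp_eq : ∀ p : ℝ × (Fin n → ℝ), K.indicator F (e.symm p)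
      = Set.indicator {t : ℝ | t^2 + (∑ i, p.2 i ^2) ≤ u}
          (fun t => (t^4 - 6*t^2 + 3) * Real.exp (-(t^2 + ∑ i, p.2 i ^2)/2)) p.1 := by
    intro p
    have hsymm : e.symm p = Fin.cons p.1 p.2 := by
      rw [hedef, MeasurableEquiv.piFinSuccAbove_symm_apply]
      simp [Fin.insertNthEquiv, Fin.insertNth_zero']
    have hsum : ∑ i, (Fin.cons p.1 p.2 : Fin (n+1) → ℝ) i ^2 = p.1^2 + ∑ i, p.2 i ^2 := by
      rw [Fin.sum_univ_succ]
      simp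
    rw [hsymm]
    simp only [Set.indicator_apply, hKdef, Set.mem_setOf_eq, hsum, hFdef, Fin.cons_zero]
  have inner_all : ∀ y : Fin n → ℝ,
      (∫ t : ℝ, K.indicator F (e.symm (t, y))) = hfun u (∑ i, y i ^2) := by
    intro y
    have hQ : (0:ℝ) ≤ ∑ i, y i ^2 := Finset.sum_nonneg fun i _ => sq_nonneg _
    rw [integral_congr_ae (ae_of_all _ (fun t => comp_eq (t, y)))]
    exact inner_eval u _ hQ
  -- main integral computation
  have main_int : (∫ z in K,
        iteratedDeriv 4
          (fun t => Real.exp (-(∑ i, Function.update z (⟨0, by omega⟩ : Fin (n+1)) t i ^ 2) / 2))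
          (z ⟨0, by omega⟩))
      = (n:ℝ) * ((Real.sqrt π)^n / Real.Gamma ((n:ℝ)/2+1)) *
          (Real.exp (-u/2) *
            (3 * (u^((n:ℝ)/2+1/2) * (Real.Gamma ((n:ℝ)/2) * Real.Gamma (3/2) / Real.Gamma ((n:ℝ)/2+3/2)))
              - u^((n:ℝ)/2+3/2) * (Real.Gamma ((n:ℝ)/2) * Real.Gamma (5/2) / Real.Gamma ((n:ℝ)/2+5/2)))) := by
    rw [setIntegral_congr_fun hKm (fun z _ => integrand_eq z), ← integral_indicator hKm]
    rw [← hPres.integral_comp e.symm.measurableEmbedding (K.indicator F)]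
    rw [MeasureTheory.integral_prod_symm _ hIntProd]
    simp only [inner_all]
    -- Euclidean transfer
    have hnorm : ∀ x : EuclideanSpace ℝ (Fin n), ∑ i, x i ^2 = ‖x‖^2 := by
      intro x
      rw [EuclideanSpace.norm_eq, Real.sq_sqrt (Finset.sum_nonneg fun i _ => sq_nonneg _)]
      simp [sq_abs]
    have hEuc : (∫ y : Fin n → ℝ, hfun u (∑ i, y i ^2))
        = ∫ x : EuclideanSpace ℝ (Fin n), (fun r => hfun u (r^2)) ‖x‖ := by
      rw [← (EuclideanSpace.volume_preserving_symm_measurableEquiv_toLp (Fin n)).integral_comp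
        (MeasurableEquiv.measurableEmbedding _) (fun y : Fin n → ℝ => hfun u (∑ i, y i ^2))]
      apply integral_congr_ae (ae_of_all _ _)
      intro x
      change hfun u (∑ i, x.ofLp i ^ 2) = _
      rw [hnorm x]
    rw [hEuc, integral_fun_norm_addHaar (volume : Measure (EuclideanSpace ℝ (Fin n)))
      (fun r => hfun u (r^2))]
    rw [finrank_euclideanSpace_fin]
    have hV : (volume (Metric.ball (0 : EuclideanSpace ℝ (Fin n)) 1)).toReal
        = (Real.sqrt π)^n / Real.Gamma ((n:ℝ)/2+1) := by
      rw [EuclideanSpace.volume_ball]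
      simp only [Fintype.card_fin, ENNReal.ofReal_one, one_pow, one_mul]
      rw [ENNReal.toReal_ofReal (by positivity)]
    rw [measureReal_def, hV]
    simp only [nsmul_eq_mul, smul_eq_mul]
    rw [show (∫ y in Set.Ioi (0:ℝ), y^(n-1) * hfun u (y^2)) = _ from rad_int n hn u hu]
    ring
  rw [main_int]
  have := final_arith n hn u hu
  push_cast
  convert this using 2 <;> push_cast <;> ring
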